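/- arXiv:2106.12217 — 2 statements merged into one kernel-verified Lean document; each statement's English description precedes it below -/
import Mathlib

section
/- Let f : ℝ → ℝ be C¹ with f(x) > ε > 0, f and f' bounded, Λ(x) = ∫₀ˣ 1/f, Λ⁻¹ its inverse. Define u(t,x) := (f(Λ⁻¹(Λ(x) − t))/f(x)) · exp(−((Λ⁻¹(Λ(x) − t))² − x²)/(2T)) for t ∈ [0,T]. Then u(0,x) = 1 for all x, and u satisfies the PDE ∂ₜu = −∂ₓ(f(x)·u) + f(x)·u·x/T on (0,T] × ℝ. -/
/-!
Write `g(t, x) = Λ⁻¹(Λ x - t)` for the backward characteristics of `∂ₜ + f ∂ₓ`: since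
`(Λ⁻¹)' = f ∘ Λ⁻¹`, every `F ∘ g` solves the transport equation `∂ₜ v = -f ∂ₓ v`.
Splitting the exponential, `u = F(g) · w / f` with `F z = f z · exp (-z² / 2T)` and
`w x = exp (x² / 2T)`, so `f u = F(g) · w`, and the extra term `f u x / T` is exactly the
contribution of `w' = w x / T` to `∂ₓ (f u)`.
-/

open MeasureTheory

theorem hasDerivAt_rightInverse_of_deriv_pos {Λ Λ' L : ℝ → ℝ} (hΛ : ∀ x, HasDerivAt Λ (Λ' x) x)
    (hΛ' : ∀ x, 0 < Λ' x) (hL : Function.RightInverse L Λ) (y : ℝ) :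
    HasDerivAt L (Λ' (L y))⁻¹ y := by
  have hΛ_mono : StrictMono Λ := strictMono_of_hasDerivAt_pos hΛ hΛ'
  have hL_mono : StrictMono L := fun a b hab => hΛ_mono.lt_iff_lt.mp (by rwa [hL a, hL b])
  have hL_surj : Function.Surjective L := fun x => ⟨Λ x, hΛ_mono.injective (hL (Λ x))⟩
  exact (hΛ (L y)).of_local_left_inverse
    (hL_mono.monotone.continuous_of_surjective hL_surj).continuousAt (hΛ' _).ne'
    (Filter.Eventually.of_forall hL)

section Characteristics

variable {f Λ L F : ℝ → ℝ} {t x : ℝ}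

theorem hasDerivAt_comp_characteristic_time (hL : ∀ y, HasDerivAt L (f (L y)) y)
    (hF : DifferentiableAt ℝ F (L (Λ x - t))) :
    HasDerivAt (fun s => F (L (Λ x - s))) (-(deriv F (L (Λ x - t)) * f (L (Λ x - t)))) t :=
  (hF.hasDerivAt.comp t ((hL _).comp t ((hasDerivAt_id' t).const_sub (Λ x)))).congr_deriv
    (by ring)

theorem hasDerivAt_comp_characteristic_space (hL : ∀ y, HasDerivAt L (f (L y)) y)
    (hΛ : ∀ y, HasDerivAt Λ (f y)⁻¹ y) (hF : DifferentiableAt ℝ F (L (Λ x - t))) :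
    HasDerivAt (fun y => F (L (Λ y - t)))
      (deriv F (L (Λ x - t)) * f (L (Λ x - t)) * (f x)⁻¹) x :=
  (hF.hasDerivAt.comp x ((hL _).comp x ((hΛ x).sub_const t))).congr_deriv (by ring)

end Characteristics

theorem hasDerivAt_exp_sq_div (T x : ℝ) :
    HasDerivAt (fun y => Real.exp (y ^ 2 / (2 * T))) (Real.exp (x ^ 2 / (2 * T)) * (x / T)) x := by
  convert ((hasDerivAt_pow 2 x).div_const (2 * T)).exp using 2
  push_cast
  ring

theorem u_solves_pde_general
    (f : ℝ → ℝ) (ε : ℝ) (hε : 0 < ε) (hf : ContDiff ℝ 1 f)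
    (hfε : ∀ x, ε < f x)
    (Λ Linv : ℝ → ℝ) (hΛ : ∀ x, Λ x = ∫ t in (0:ℝ)..x, 1 / f t)
    (hLinv : Function.LeftInverse Linv Λ) (hRinv : Function.RightInverse Linv Λ)
    (T : ℝ)
    (u : ℝ → ℝ → ℝ)
    (hu : ∀ t x, u t x = (f (Linv (Λ x - t)) / f x) *
        Real.exp (-((Linv (Λ x - t)) ^ 2 - x ^ 2) / (2 * T))) :
    (∀ x, u 0 x = 1) ∧
      ∀ t ∈ Set.Ioc (0:ℝ) T, ∀ x : ℝ,
        deriv (fun s => u s x) t =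
          -(deriv (fun y => f y * u t y) x) + f x * u t x * x / T := by
  have hf_pos x : 0 < f x := hε.trans (hfε x)
  have hΛ_deriv x : HasDerivAt Λ (f x)⁻¹ x := by
    rw [funext hΛ, ← one_div]
    exact ((continuous_const.div hf.continuous fun y => (hf_pos y).ne').integral_hasStrictDerivAt
      0 x).hasDerivAt
  have hL_deriv y : HasDerivAt Linv (f (Linv y)) y := by
    simpa using hasDerivAt_rightInverse_of_deriv_pos hΛ_deriv (fun x => inv_pos.mpr (hf_pos x)) hRinv y
  refine ⟨fun x => by simp [hu, hLinv x, (hf_pos x).ne'], fun t _ x => ?_⟩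
  set F : ℝ → ℝ := fun z => f z * Real.exp (-z ^ 2 / (2 * T))
  set w : ℝ → ℝ := fun y => Real.exp (y ^ 2 / (2 * T))
  have hu_split : u = fun t y => F (Linv (Λ y - t)) * w y / f y := by
    ext t y
    rw [hu, show -(Linv (Λ y - t) ^ 2 - y ^ 2) / (2 * T)
      = -Linv (Λ y - t) ^ 2 / (2 * T) + y ^ 2 / (2 * T) by ring, Real.exp_add]
    ring
  have hfu : (fun y => f y * u t y) = fun y => F (Linv (Λ y - t)) * w y := by
    ext y
    rw [hu_split, mul_div_cancel₀ _ (hf_pos y).ne']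
  have hf_diff : Differentiable ℝ f := hf.differentiable one_ne_zero
  have hF : DifferentiableAt ℝ F (Linv (Λ x - t)) := by simp only [F]; fun_prop
  have h_space : HasDerivAt (fun y => F (Linv (Λ y - t)) * w y) _ x :=
    (hasDerivAt_comp_characteristic_space hL_deriv hΛ_deriv hF).mul (hasDerivAt_exp_sq_div T x)
  have h_time : HasDerivAt (fun s => F (Linv (Λ x - s)) * w x / f x) _ t :=
    ((hasDerivAt_comp_characteristic_time hL_deriv hF).mul_const (w x)).div_const (f x)
  rw [hfu, h_space.deriv, hu_split, h_time.deriv]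
  field_simp [w, (hf_pos x).ne']
  ring

theorem u_solves_pde
    (f : ℝ → ℝ) (ε : ℝ) (hε : 0 < ε) (hf : ContDiff ℝ 1 f)
    (hfb : ∃ C, ∀ x, |f x| ≤ C) (hf'b : ∃ C, ∀ x, |deriv f x| ≤ C)
    (hfε : ∀ x, ε < f x)
    (Λ Linv : ℝ → ℝ) (hΛ : ∀ x, Λ x = ∫ t in (0:ℝ)..x, 1 / f t)
    (hLinv : Function.LeftInverse Linv Λ) (hRinv : Function.RightInverse Linv Λ)
    (T : ℝ) (hT : 0 < T)
    (u : ℝ → ℝ → ℝ)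
    (hu : ∀ t x, u t x = (f (Linv (Λ x - t)) / f x) *
        Real.exp (-((Linv (Λ x - t)) ^ 2 - x ^ 2) / (2 * T))) :
    (∀ x, u 0 x = 1) ∧
      ∀ t ∈ Set.Ioc (0:ℝ) T, ∀ x : ℝ,
        deriv (fun s => u s x) t =
          -(deriv (fun y => f y * u t y) x) + f x * u t x * x / T :=
  u_solves_pde_general f ε hε hf hfε Λ Linv hΛ hLinv hRinv T u hu
end

section
/- Let f : ℝ → ℝ be C¹ with f(x) > ε > 0, f bounded, Λ(x) = ∫₀ˣ 1/f, Λ⁻¹ its inverse, x' ∈ ℝ, and T > 0. Then the function p̃(t,x) := (1/√(2πT))·(f(Λ⁻¹(Λ(x) − t))/f(x))·exp(−(Λ⁻¹(Λ(x) − t) − x')²/(2T)) solves the Liouville equation ∂ₜ p̃(t,x) = −∂ₓ(f(x)·p̃(t,x)) on (0,T] × ℝ with initial condition p̃(0,x) = (1/√(2πT))·exp(−(x − x')²/(2T)). -/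
/-!
Write `G u := f u · exp(-(u - x')² / (2T)) / √(2πT)`. Then `f(x) p̃(t, x) = G(Λ⁻¹(Λ x - t))` is
constant along the characteristics `Λ x - t = const`, and `Λ' = 1 / f` gives
`(Λ⁻¹)' = f ∘ Λ⁻¹`. Hence `∂ₜ (f p̃) = -f ∂ₓ (f p̃)`, which is the Liouville equation after dividing
by `f x`.
-/

open MeasureTheory

theorem hasDerivAt_inverse_of_hasDerivAt_pos {Λ Λ' L : ℝ → ℝ}
    (hΛ : ∀ x, HasDerivAt Λ (Λ' x) x) (hpos : ∀ x, 0 < Λ' x)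
    (hL : Function.LeftInverse L Λ) (hR : Function.RightInverse L Λ) (y : ℝ) :
    HasDerivAt L (Λ' (L y))⁻¹ y := by
  have hmono : StrictMono Λ := strictMono_of_deriv_pos fun x => (hΛ x).deriv ▸ hpos x
  have hLmono : Monotone L := fun a b hab => hmono.le_iff_le.mp (by rwa [hR a, hR b])
  have hLcont : Continuous L := hLmono.continuous_of_surjective hL.surjective
  exact (hΛ (L y)).of_local_left_inverse hLcont.continuousAt (hpos _).ne'
    (Filter.Eventually.of_forall hR)

theorem deriv_comp_characteristic_div_eq_neg_deriv {f Λ L G : ℝ → ℝ} {t x : ℝ}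
    (hΛ : HasDerivAt Λ (1 / f x) x) (hL : HasDerivAt L (f (L (Λ x - t))) (Λ x - t))
    (hG : DifferentiableAt ℝ G (L (Λ x - t))) :
    deriv (fun s => G (L (Λ x - s)) / f x) t = -deriv (fun y => G (L (Λ y - t))) x := by
  have htime : HasDerivAt (fun s => G (L (Λ x - s)) / f x)
      (deriv G (L (Λ x - t)) * (f (L (Λ x - t)) * -1) / f x) t :=
    (hG.hasDerivAt.comp t (hL.comp t ((hasDerivAt_id t).const_sub _))).div_const _
  have hspace : HasDerivAt (fun y => G (L (Λ y - t)))
      (deriv G (L (Λ x - t)) * (f (L (Λ x - t)) * (1 / f x))) x :=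
    hG.hasDerivAt.comp x (hL.comp x (hΛ.sub_const t))
  rw [htime.deriv, hspace.deriv]
  ring

theorem approx_density_solves_liouville_equation_general
    (f : ℝ → ℝ) (ε : ℝ) (hε : 0 < ε) (hf : ContDiff ℝ 1 f)
    (hfε : ∀ x, ε < f x)
    (Λ Linv : ℝ → ℝ) (hΛ : ∀ x, Λ x = ∫ t in (0:ℝ)..x, 1 / f t)
    (hLinv : Function.LeftInverse Linv Λ) (hRinv : Function.RightInverse Linv Λ)
    (T x' : ℝ)
    (p : ℝ → ℝ → ℝ)
    (hp : ∀ t x, p t x = (1 / Real.sqrt (2 * Real.pi * T)) *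
        (f (Linv (Λ x - t)) / f x) *
        Real.exp (-(Linv (Λ x - t) - x') ^ 2 / (2 * T))) :
    (∀ x, p 0 x = (1 / Real.sqrt (2 * Real.pi * T)) *
        Real.exp (-(x - x') ^ 2 / (2 * T))) ∧
      ∀ t ∈ Set.Ioc (0:ℝ) T, ∀ x : ℝ,
        deriv (fun s => p s x) t = -(deriv (fun y => f y * p t y) x) := by
  have hfpos : ∀ x, 0 < f x := fun x => hε.trans (hfε x)
  have hΛ' : ∀ x, HasDerivAt Λ (1 / f x) x := fun x => by
    rw [funext hΛ]
    exact ((continuous_const.div hf.continuous fun y => (hfpos y).ne').integral_hasStrictDerivAt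
      0 x).hasDerivAt
  have hLinv' : ∀ y, HasDerivAt Linv (f (Linv y)) y := fun y => by
    simpa only [one_div, inv_inv] using
      hasDerivAt_inverse_of_hasDerivAt_pos hΛ' (fun x => one_div_pos.mpr (hfpos x)) hLinv hRinv y
  set G : ℝ → ℝ := fun u => 1 / Real.sqrt (2 * Real.pi * T) *
    (f u * Real.exp (-(u - x') ^ 2 / (2 * T)))
  have hG : Differentiable ℝ G := by
    have := hf.differentiable one_ne_zero
    fun_prop
  refine ⟨fun x => by rw [hp, sub_zero, hLinv x, div_self (hfpos x).ne', mul_one], ?_⟩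
  intro t _ x
  have htime : (fun s => p s x) = fun s => G (Linv (Λ x - s)) / f x := by
    funext s
    rw [hp]
    ring
  have hspace : (fun y => f y * p t y) = fun y => G (Linv (Λ y - t)) := by
    funext y
    simp only [hp, G]
    field_simp [(hfpos y).ne']
  rw [htime, hspace]
  exact deriv_comp_characteristic_div_eq_neg_deriv (hΛ' x) (hLinv' _) (hG _)

theorem approx_density_solves_liouville_equation
    (f : ℝ → ℝ) (ε : ℝ) (hε : 0 < ε) (hf : ContDiff ℝ 1 f)
    (hfb : ∃ C, ∀ x, |f x| ≤ C)
    (hfε : ∀ x, ε < f x)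
    (Λ Linv : ℝ → ℝ) (hΛ : ∀ x, Λ x = ∫ t in (0:ℝ)..x, 1 / f t)
    (hLinv : Function.LeftInverse Linv Λ) (hRinv : Function.RightInverse Linv Λ)
    (T x' : ℝ) (hT : 0 < T)
    (p : ℝ → ℝ → ℝ)
    (hp : ∀ t x, p t x = (1 / Real.sqrt (2 * Real.pi * T)) *
        (f (Linv (Λ x - t)) / f x) *
        Real.exp (-(Linv (Λ x - t) - x') ^ 2 / (2 * T))) :
    (∀ x, p 0 x = (1 / Real.sqrt (2 * Real.pi * T)) *
        Real.exp (-(x - x') ^ 2 / (2 * T))) ∧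
      ∀ t ∈ Set.Ioc (0:ℝ) T, ∀ x : ℝ,
        deriv (fun s => p s x) t = -(deriv (fun y => f y * p t y) x) :=
  approx_density_solves_liouville_equation_general f ε hε hf hfε Λ Linv hΛ hLinv hRinv T x' p hp
end
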